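/- Let Δt ∈ ℝ, let f^n, f^{n+1/2}, f^{n+1} be phase-space densities, E^n, E^{n+1} electric fields with E^n of class C¹, and ρ_i : ℝ^d → ℝ a fixed (ion background) function. Suppose pointwise f^{n+1}(x,v) = f^n(x,v) − Δt( v·∇_x f^{n+1/2}(x,v) + (1/2)(E^n(x)+E^{n+1}(x))·∇_v f^{n+1/2}(x,v) ) and E^{n+1}(x) = E^n(x) − Δt·J_{f^{n+1/2}}(x). If Gauss's law holds at step n, i.e. div_x E^n(x) = ρ_{f^n}(x) − ρ_i(x) for all x, then it holds at step n+1: div_x E^{n+1}(x) = ρ_{f^{n+1}}(x) − ρ_i(x) for all x. -/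

import Mathlib

open MeasureTheory
open scoped RealInnerProductSpace

noncomputable section

/-- Points of `ℝ^d`. -/
abbrev Vec (d : ℕ) := EuclideanSpace ℝ (Fin d)

/-- Gradient of a phase-space function in its first (`x`) argument. -/
def gradx {d : ℕ} (f : Vec d × Vec d → ℝ) (x v : Vec d) : Vec d :=
  gradient (fun y => f (y, v)) x

/-- Gradient of a phase-space function in its second (`v`) argument. -/
def gradv {d : ℕ} (f : Vec d × Vec d → ℝ) (x v : Vec d) : Vec d :=
  gradient (fun w => f (x, w)) v

/-- Charge density `ρ_f(x) = ∫ f(x,v) dv`. -/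
def rho {d : ℕ} (f : Vec d × Vec d → ℝ) (x : Vec d) : ℝ :=
  ∫ v, f (x, v)

/-- Current `J_f(x) = ∫ f(x,v) v dv`. -/
def Jcur {d : ℕ} (f : Vec d × Vec d → ℝ) (x : Vec d) : Vec d :=
  ∫ v, f (x, v) • v

/-- Particle number `N(f)`. -/
def Npart {d : ℕ} (f : Vec d × Vec d → ℝ) : ℝ :=
  ∫ x, ∫ v, f (x, v)

/-- Kinetic energy `K(f) = ∫∫ f(x,v) |v|² dv dx`. -/
def Kin {d : ℕ} (f : Vec d × Vec d → ℝ) : ℝ :=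
  ∫ x, ∫ v, f (x, v) * ‖v‖ ^ 2

/-- Electric energy `W(E) = ∫ |E(x)|² dx`. -/
def Wel {d : ℕ} (E : Vec d → Vec d) : ℝ :=
  ∫ x, ‖E x‖ ^ 2

/-- A phase-space density: smooth and compactly supported. -/
def IsDensity {d : ℕ} (f : Vec d × Vec d → ℝ) : Prop :=
  ContDiff ℝ (⊤ : ℕ∞) f ∧ HasCompactSupport f

/-- An electric field: continuous with finite electric energy. -/
def IsEField {d : ℕ} (E : Vec d → Vec d) : Prop :=
  Continuous E ∧ Integrable (fun x => ‖E x‖ ^ 2)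

/-- Divergence in `x` of a vector field on `ℝ^d`. -/
def divg {d : ℕ} (F : Vec d → Vec d) (x : Vec d) : ℝ :=
  ∑ i : Fin d, fderiv ℝ F x (EuclideanSpace.single i 1) i

section Aux

variable {d : ℕ}

/-- Decomposition of a vector of `ℝ^d` in the standard basis. -/
lemma Vec.sum_single (v : Vec d) :
    ∑ i : Fin d, v i • EuclideanSpace.single i (1 : ℝ) = v := by
  ext j
  calc (∑ i : Fin d, v i • EuclideanSpace.single i (1 : ℝ)) j
      = (EuclideanSpace.proj j : Vec d →L[ℝ] ℝ)
        (∑ i : Fin d, v i • EuclideanSpace.single i (1 : ℝ)) := rfl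
    _ = ∑ i : Fin d, (EuclideanSpace.proj j : Vec d →L[ℝ] ℝ)
        (v i • EuclideanSpace.single i (1 : ℝ)) := by rw [map_sum]
    _ = v j := by simp [EuclideanSpace.single_apply]

lemma partial_x_hasFDerivAt {f : Vec d × Vec d → ℝ} (hf : ContDiff ℝ (⊤ : ℕ∞) f) (x v : Vec d) :
    HasFDerivAt (fun y => f (y, v))
      ((fderiv ℝ f (x, v)).comp (ContinuousLinearMap.inl ℝ (Vec d) (Vec d))) x :=
  ((hf.differentiable (by simp) (x, v)).hasFDerivAt).comp x (hasFDerivAt_prodMk_left x v)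

lemma partial_v_hasFDerivAt {f : Vec d × Vec d → ℝ} (hf : ContDiff ℝ (⊤ : ℕ∞) f) (x v : Vec d) :
    HasFDerivAt (fun w => f (x, w))
      ((fderiv ℝ f (x, v)).comp (ContinuousLinearMap.inr ℝ (Vec d) (Vec d))) v :=
  ((hf.differentiable (by simp) (x, v)).hasFDerivAt).comp v (hasFDerivAt_prodMk_right x v)

lemma inner_gradx_eq {f : Vec d × Vec d → ℝ} (hf : ContDiff ℝ (⊤ : ℕ∞) f) (x v w : Vec d) :
    ⟪w, gradx f x v⟫ = fderiv ℝ f (x, v) (w, 0) := by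
  rw [real_inner_comm]
  have h1 : gradx f x v
      = (InnerProductSpace.toDual ℝ (Vec d)).symm (fderiv ℝ (fun y => f (y, v)) x) := rfl
  rw [h1, InnerProductSpace.toDual_symm_apply, (partial_x_hasFDerivAt hf x v).fderiv]
  rfl

lemma inner_gradv_eq {f : Vec d × Vec d → ℝ} (hf : ContDiff ℝ (⊤ : ℕ∞) f) (x v w : Vec d) :
    ⟪w, gradv f x v⟫ = fderiv ℝ f (x, v) (0, w) := by
  rw [real_inner_comm]
  have h1 : gradv f x v
      = (InnerProductSpace.toDual ℝ (Vec d)).symm (fderiv ℝ (fun u => f (x, u)) v) := rfl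
  rw [h1, InnerProductSpace.toDual_symm_apply, (partial_v_hasFDerivAt hf x v).fderiv]
  rfl

lemma fderiv_eq_zero_of_nmem {f : Vec d × Vec d → ℝ} {x v : Vec d}
    (hv : v ∉ Prod.snd '' tsupport f) : fderiv ℝ f (x, v) = 0 := by
  by_contra h
  exact hv ⟨(x, v), support_fderiv_subset ℝ h, rfl⟩

lemma fun_eq_zero_of_nmem {f : Vec d × Vec d → ℝ} {x v : Vec d}
    (hv : v ∉ Prod.snd '' tsupport f) : f (x, v) = 0 := by
  apply image_eq_zero_of_notMem_tsupport
  exact fun hmem => hv ⟨(x, v), hmem, rfl⟩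

lemma continuous_F' {f : Vec d × Vec d → ℝ} (hf : ContDiff ℝ (⊤ : ℕ∞) f) (x : Vec d) :
    Continuous fun v : Vec d =>
      ((fderiv ℝ f (x, v)).comp (ContinuousLinearMap.inl ℝ (Vec d) (Vec d))).smulRight v := by
  have h1 : Continuous fun v : Vec d => fderiv ℝ f (x, v) :=
    (hf.continuous_fderiv (by simp)).comp (continuous_const.prodMk continuous_id)
  have h2 : Continuous fun v : Vec d =>
      (fderiv ℝ f (x, v)).comp (ContinuousLinearMap.inl ℝ (Vec d) (Vec d)) :=
    (((ContinuousLinearMap.compL ℝ (Vec d) (Vec d × Vec d) ℝ).flip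
      (ContinuousLinearMap.inl ℝ (Vec d) (Vec d))).continuous).comp h1
  exact (((ContinuousLinearMap.smulRightL ℝ (Vec d) (Vec d)).continuous.comp h2).clm_apply
    continuous_id)

lemma integrable_F' {f : Vec d × Vec d → ℝ} (hf : ContDiff ℝ (⊤ : ℕ∞) f)
    (hc : HasCompactSupport f) (x : Vec d) :
    Integrable fun v : Vec d =>
      ((fderiv ℝ f (x, v)).comp (ContinuousLinearMap.inl ℝ (Vec d) (Vec d))).smulRight v := by
  apply (continuous_F' hf x).integrable_of_hasCompactSupport
  apply HasCompactSupport.intro (hc.image continuous_snd)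
  intro v hv
  rw [fderiv_eq_zero_of_nmem hv]
  ext u
  simp

/-- Differentiation under the integral sign for the current `J`. -/
lemma hasFDerivAt_Jcur {f : Vec d × Vec d → ℝ} (hf : ContDiff ℝ (⊤ : ℕ∞) f)
    (hc : HasCompactSupport f) (x : Vec d) :
    HasFDerivAt (Jcur f)
      (∫ v, ((fderiv ℝ f (x, v)).comp (ContinuousLinearMap.inl ℝ (Vec d) (Vec d))).smulRight v)
      x := by
  show HasFDerivAt (fun y : Vec d => ∫ v, f (y, v) • v)
    (∫ v, ((fderiv ℝ f (x, v)).comp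
      (ContinuousLinearMap.inl ℝ (Vec d) (Vec d))).smulRight v) x
  obtain ⟨M₀, hM₀⟩ := (hc.fderiv ℝ).exists_bound_of_continuous (hf.continuous_fderiv (by simp))
  set M := max M₀ 0 with hM
  have hMnn : 0 ≤ M := le_max_right _ _
  have hMb : ∀ p, ‖fderiv ℝ f p‖ ≤ M := fun p => (hM₀ p).trans (le_max_left _ _)
  set K2 := Prod.snd '' tsupport f with hK2
  have hK2c : IsCompact K2 := hc.image continuous_snd
  have hcont : ∀ x' : Vec d, Continuous fun v : Vec d => f (x', v) • v := fun x' =>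
    (hf.continuous.comp (continuous_const.prodMk continuous_id)).smul continuous_id
  refine hasFDerivAt_integral_of_dominated_of_fderiv_le (𝕜 := ℝ)
    (F := fun (y : Vec d) (v : Vec d) => f (y, v) • v)
    (F' := fun (y : Vec d) (v : Vec d) =>
      ((fderiv ℝ f (y, v)).comp (ContinuousLinearMap.inl ℝ (Vec d) (Vec d))).smulRight v)
    (s := Metric.ball x 1) (bound := K2.indicator fun v => M * ‖v‖) (Metric.ball_mem_nhds x one_pos) ?_ ?_ ?_ ?_ ?_ ?_
  · exact Filter.Eventually.of_forall fun x' => (hcont x').aestronglyMeasurable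
  · apply (hcont x).integrable_of_hasCompactSupport
    apply HasCompactSupport.intro hK2c
    intro v hv
    rw [fun_eq_zero_of_nmem hv, zero_smul]
  · exact (continuous_F' hf x).aestronglyMeasurable
  · apply Filter.Eventually.of_forall
    intro v x' _
    by_cases hv : v ∈ K2
    · rw [Set.indicator_of_mem hv]
      rw [ContinuousLinearMap.norm_smulRight_apply]
      gcongr
      calc ‖(fderiv ℝ f (x', v)).comp (ContinuousLinearMap.inl ℝ (Vec d) (Vec d))‖
          ≤ ‖fderiv ℝ f (x', v)‖ * ‖ContinuousLinearMap.inl ℝ (Vec d) (Vec d)‖ :=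
            ContinuousLinearMap.opNorm_comp_le _ _
        _ ≤ M * 1 := by
            gcongr
            · exact hMb _
            · apply ContinuousLinearMap.opNorm_le_bound _ zero_le_one
              intro u
              simp [Prod.norm_def]
        _ = M := mul_one M
    · rw [Set.indicator_of_notMem hv]
      show ‖((fderiv ℝ f (x', v)).comp
        (ContinuousLinearMap.inl ℝ (Vec d) (Vec d))).smulRight v‖ ≤ 0
      rw [fderiv_eq_zero_of_nmem hv]
      have h0 : ((0 : Vec d × Vec d →L[ℝ] ℝ).comp
          (ContinuousLinearMap.inl ℝ (Vec d) (Vec d))).smulRight v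
          = (0 : Vec d →L[ℝ] Vec d) := by
        ext u
        simp
      rw [h0, norm_zero]
  · rw [integrable_indicator_iff hK2c.measurableSet]
    exact (continuous_const.mul continuous_norm).continuousOn.integrableOn_compact hK2c
  · apply Filter.Eventually.of_forall
    intro v x' _
    exact (partial_x_hasFDerivAt hf x' v).smul_const v

lemma lipschitz_const_one : LipschitzWith 0 (fun _ : Vec d => (1 : ℝ)) :=
  LipschitzWith.const 1

/-- The integral of a `v`-directional derivative of a compactly supported smooth
function vanishes. -/
lemma integral_partial_v_eq_zero {f : Vec d × Vec d → ℝ} (hf : ContDiff ℝ (⊤ : ℕ∞) f)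
    (hc : HasCompactSupport f) (x c : Vec d) :
    ∫ v, fderiv ℝ f (x, v) (0, c) = 0 := by
  set g : Vec d → ℝ := fun w => f (x, w) with hg
  have hgsm : ContDiff ℝ (⊤ : ℕ∞) g := hf.comp (contDiff_const.prodMk contDiff_id)
  have hgc : HasCompactSupport g := by
    apply HasCompactSupport.intro (hc.image continuous_snd)
    intro w hw
    exact fun_eq_zero_of_nmem hw
  obtain ⟨C, hC⟩ := ContDiff.lipschitzWith_of_hasCompactSupport hgc hgsm (by simp)
  have key := LipschitzWith.integral_lineDeriv_mul_eq (μ := (volume : Measure (Vec d)))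
    lipschitz_const_one hC hgc (-c)
  have hL : (fun w : Vec d => lineDeriv ℝ (fun _ : Vec d => (1 : ℝ)) w (-c) * g w)
      = fun _ => 0 := by
    funext w
    simp [lineDeriv]
  rw [hL] at key
  simp only [integral_zero] at key
  have hgr : ∀ w : Vec d, lineDeriv ℝ g w (- -c) * (1 : ℝ) = fderiv ℝ f (x, w) (0, c) := by
    intro w
    rw [mul_one, neg_neg, (hgsm.differentiable (by simp) w).lineDeriv_eq_fderiv,
      (partial_v_hasFDerivAt hf x w).fderiv]
    rfl
  rw [← integral_congr_ae (Filter.Eventually.of_forall hgr)]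
  exact key.symm

lemma continuous_A {f : Vec d × Vec d → ℝ} (hf : ContDiff ℝ (⊤ : ℕ∞) f) (x : Vec d)
    (w : Vec d → Vec d × Vec d) (hw : Continuous w) :
    Continuous fun v : Vec d => fderiv ℝ f (x, v) (w v) := by
  have h1 : Continuous fun v : Vec d => fderiv ℝ f (x, v) :=
    (hf.continuous_fderiv (by simp)).comp (continuous_const.prodMk continuous_id)
  exact h1.clm_apply hw

lemma integrable_A {f : Vec d × Vec d → ℝ} (hf : ContDiff ℝ (⊤ : ℕ∞) f)
    (hc : HasCompactSupport f) (x : Vec d) (w : Vec d → Vec d × Vec d) (hw : Continuous w) :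
    Integrable fun v : Vec d => fderiv ℝ f (x, v) (w v) := by
  apply (continuous_A hf x w hw).integrable_of_hasCompactSupport
  apply HasCompactSupport.intro (hc.image continuous_snd)
  intro v hv
  rw [fderiv_eq_zero_of_nmem hv]
  simp

/-- The divergence of the current. -/
lemma divg_Jcur_eq {f : Vec d × Vec d → ℝ} (hf : ContDiff ℝ (⊤ : ℕ∞) f)
    (hc : HasCompactSupport f) (x : Vec d) :
    divg (Jcur f) x = ∫ v, fderiv ℝ f (x, v) (v, 0) := by
  have hJ := hasFDerivAt_Jcur hf hc x
  rw [divg, hJ.fderiv]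
  have hstep : ∀ i : Fin d,
      (∫ v, ((fderiv ℝ f (x, v)).comp
        (ContinuousLinearMap.inl ℝ (Vec d) (Vec d))).smulRight v)
        (EuclideanSpace.single i 1) i
      = ∫ v, fderiv ℝ f (x, v) (EuclideanSpace.single i 1, 0) * v i := by
    intro i
    set Φ : ((Vec d) →L[ℝ] (Vec d)) →L[ℝ] ℝ :=
      (EuclideanSpace.proj i).comp
        (ContinuousLinearMap.apply ℝ (Vec d) (EuclideanSpace.single i 1)) with hΦ
    have hcomm := Φ.integral_comp_comm (integrable_F' hf hc x)
    have h1 : ∀ v : Vec d, Φ (((fderiv ℝ f (x, v)).comp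
        (ContinuousLinearMap.inl ℝ (Vec d) (Vec d))).smulRight v)
        = fderiv ℝ f (x, v) (EuclideanSpace.single i 1, 0) * v i := by
      intro v
      simp only [hΦ, ContinuousLinearMap.coe_comp', Function.comp_apply,
        ContinuousLinearMap.apply_apply, ContinuousLinearMap.smulRight_apply]
      simp [smul_eq_mul]
    calc (∫ v, ((fderiv ℝ f (x, v)).comp
          (ContinuousLinearMap.inl ℝ (Vec d) (Vec d))).smulRight v)
          (EuclideanSpace.single i 1) i
        = Φ (∫ v, ((fderiv ℝ f (x, v)).comp
          (ContinuousLinearMap.inl ℝ (Vec d) (Vec d))).smulRight v) := rfl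
      _ = ∫ v, Φ (((fderiv ℝ f (x, v)).comp
          (ContinuousLinearMap.inl ℝ (Vec d) (Vec d))).smulRight v) := hcomm.symm
      _ = ∫ v, fderiv ℝ f (x, v) (EuclideanSpace.single i 1, 0) * v i := by
          exact integral_congr_ae (Filter.Eventually.of_forall h1)
  rw [Finset.sum_congr rfl fun i _ => hstep i]
  rw [← integral_finset_sum]
  · apply integral_congr_ae
    apply Filter.Eventually.of_forall
    intro v
    have hv0 : ((v, (0 : Vec d)) : Vec d × Vec d)
        = ∑ i : Fin d, v i • ((EuclideanSpace.single i (1 : ℝ) : Vec d), (0 : Vec d)) := by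
      have := Vec.sum_single v
      rw [Prod.ext_iff]
      constructor
      · rw [Prod.fst_sum]
        simp only [Prod.smul_mk]
        simpa using this.symm
      · rw [Prod.snd_sum]
        simp
    show ∑ i : Fin d, fderiv ℝ f (x, v) (EuclideanSpace.single i 1, 0) * v i
      = fderiv ℝ f (x, v) (v, 0)
    rw [hv0, map_sum]
    apply Finset.sum_congr rfl
    intro i _
    rw [ContinuousLinearMap.map_smul, smul_eq_mul, mul_comm]
  · intro i _
    apply Continuous.integrable_of_hasCompactSupport
    · exact (continuous_A hf x (fun _ => (EuclideanSpace.single i 1, 0))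
        continuous_const).mul (EuclideanSpace.proj i).continuous
    · apply HasCompactSupport.intro (hc.image continuous_snd)
      intro v hv
      rw [fderiv_eq_zero_of_nmem hv]
      simp

end Aux

/-- the Ampère update of Scheme-1 propagates Gauss's law exactly. -/
theorem scheme1_gauss_law_propagation
    {d : ℕ} (hd : 1 ≤ d) (Δt : ℝ)
    (fn fh fn1 : Vec d × Vec d → ℝ) (En En1 : Vec d → Vec d) (ρi : Vec d → ℝ)
    (hfn : IsDensity fn) (hfh : IsDensity fh) (hfn1 : IsDensity fn1)
    (hEn : Continuous En) (hEn1 : Continuous En1) (hEnC1 : ContDiff ℝ 1 En)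
    (h3 : ∀ x v : Vec d, fn1 (x, v) =
      fn (x, v) - Δt * (⟪v, gradx fh x v⟫ +
        (1 / 2) * ⟪En x + En1 x, gradv fh x v⟫))
    (h2 : ∀ x : Vec d, En1 x = En x - Δt • Jcur fh x)
    (hGauss : ∀ x : Vec d, divg En x = rho fn x - ρi x) :
    ∀ x : Vec d, divg En1 x = rho fn1 x - ρi x := by
  intro x
  obtain ⟨hfhs, hfhc⟩ := hfh
  have hJ := hasFDerivAt_Jcur hfhs hfhc x
  -- Step A: divergence of the updated field
  have hEn1fun : En1 = fun y => En y - Δt • Jcur fh y := funext h2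
  have hEnd : HasFDerivAt En (fderiv ℝ En x) x := (hEnC1.differentiable one_ne_zero x).hasFDerivAt
  have hJd : HasFDerivAt (fun y => Δt • Jcur fh y)
      (Δt • ∫ v, ((fderiv ℝ fh (x, v)).comp
        (ContinuousLinearMap.inl ℝ (Vec d) (Vec d))).smulRight v) x := hJ.const_smul Δt
  have hEn1d : HasFDerivAt En1
      (fderiv ℝ En x - Δt • ∫ v, ((fderiv ℝ fh (x, v)).comp
        (ContinuousLinearMap.inl ℝ (Vec d) (Vec d))).smulRight v) x := by
    rw [hEn1fun]; exact hEnd.sub hJd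
  have hdiv1 : divg En1 x = divg En x - Δt * divg (Jcur fh) x := by
    simp only [divg]
    rw [hEn1d.fderiv, hJ.fderiv, Finset.mul_sum, ← Finset.sum_sub_distrib]
    refine Finset.sum_congr rfl fun i _ => ?_
    simp [ContinuousLinearMap.sub_apply, ContinuousLinearMap.smul_apply]
  -- Step B: charge density of the updated distribution
  have hrho : rho fn1 x = rho fn x - Δt * ∫ v, fderiv ℝ fh (x, v) (v, 0) := by
    rw [rho, rho]
    have hre : ∀ v : Vec d, fn1 (x, v)
        = fn (x, v) - Δt * (fderiv ℝ fh (x, v) (v, 0)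
          + (1 / 2) * fderiv ℝ fh (x, v) (0, En x + En1 x)) := by
      intro v
      rw [h3 x v, inner_gradx_eq hfhs, inner_gradv_eq hfhs]
    rw [integral_congr_ae (Filter.Eventually.of_forall hre)]
    have hIfn : Integrable fun v => fn (x, v) := by
      apply (hfn.1.continuous.comp
        (continuous_const.prodMk continuous_id)).integrable_of_hasCompactSupport
      apply HasCompactSupport.intro (hfn.2.image continuous_snd)
      intro v hv
      exact fun_eq_zero_of_nmem hv
    have hIA : Integrable fun v : Vec d => fderiv ℝ fh (x, v) (v, 0) :=
      integrable_A hfhs hfhc x _ (continuous_id.prodMk continuous_const)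
    have hIB : Integrable fun v : Vec d => fderiv ℝ fh (x, v) (0, En x + En1 x) :=
      integrable_A hfhs hfhc x _ continuous_const
    have hIB2 : Integrable fun v : Vec d =>
        (1 / 2 : ℝ) * fderiv ℝ fh (x, v) (0, En x + En1 x) := hIB.const_mul _
    have hIsum : Integrable fun v : Vec d => fderiv ℝ fh (x, v) (v, 0)
        + (1 / 2 : ℝ) * fderiv ℝ fh (x, v) (0, En x + En1 x) := hIA.add hIB2
    have hI2 : Integrable fun v : Vec d => Δt * (fderiv ℝ fh (x, v) (v, 0)
        + (1 / 2 : ℝ) * fderiv ℝ fh (x, v) (0, En x + En1 x)) := hIsum.const_mul Δt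
    rw [integral_sub hIfn hI2, integral_const_mul, integral_add hIA hIB2,
      integral_const_mul, integral_partial_v_eq_zero hfhs hfhc x (En x + En1 x)]
    ring
  calc divg En1 x = divg En x - Δt * divg (Jcur fh) x := hdiv1
    _ = (rho fn x - ρi x) - Δt * ∫ v, fderiv ℝ fh (x, v) (v, 0) := by
        rw [hGauss x, divg_Jcur_eq hfhs hfhc]
    _ = rho fn1 x - ρi x := by rw [hrho]; ring
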